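/- Let h̄ > 0 and let h : ℝ → ℝ be a continuously differentiable function with h - h̄ and h_x square integrable, h(x) → h̄ as |x| → ∞, and h(x) > 0 for all x. Then for every x ∈ ℝ, (g/3)·√(β/2)·(h(x) - h̄)²·(2h(x) + h̄) ≤ ∫_ℝ [ (1/2) g (h - h̄)² + (1/4) β g h² h_x² ] dy, for any constants g, β > 0. -/

import Mathlib

open MeasureTheory Filter Topology Set

/-!
The function `F = (h - h̄)² (2h + h̄) / 6` is an antiderivative of `Φ = (h - h̄) h h'` and
vanishes at `±∞`, so `F x = ∫_{-∞}^x Φ = -∫_x^∞ Φ` and hence `2 |F x| ≤ ∫ |Φ|`.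
Young's inequality `√(β/2) |a b| ≤ a²/2 + β b²/4` with `a = h - h̄`, `b = h h'` bounds
`g √(β/2) |Φ|` pointwise by the energy density.
-/

section Square

variable {α : Type*} [MeasurableSpace α] {μ : Measure α} {u v : α → ℝ}

theorem integrable_mul_of_integrable_sq (hu : AEStronglyMeasurable u μ)
    (hv : AEStronglyMeasurable v μ) (hu2 : Integrable (fun y => u y ^ 2) μ)
    (hv2 : Integrable (fun y => v y ^ 2) μ) : Integrable (fun y => u y * v y) μ :=
  ((memLp_two_iff_integrable_sq hu).2 hu2).integrable_mul ((memLp_two_iff_integrable_sq hv).2 hv2)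

theorem integrable_mul_sq_of_abs_le {M : ℝ} (hu : AEStronglyMeasurable u μ)
    (hM : ∀ y, |u y| ≤ M) (hv2 : Integrable (fun y => v y ^ 2) μ) :
    Integrable (fun y => (u y * v y) ^ 2) μ := by
  simp_rw [mul_pow]
  refine hv2.bdd_mul (c := M ^ 2) (hu.pow 2) (ae_of_all _ fun y => ?_)
  simpa using pow_le_pow_left₀ (abs_nonneg _) (hM y) 2

end Square

theorem two_mul_abs_le_integral_abs_of_hasDerivAt {F f : ℝ → ℝ}
    (hderiv : ∀ y, HasDerivAt F (f y) y) (hf : Integrable f)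
    (hF : Tendsto F (cocompact ℝ) (𝓝 0)) (x : ℝ) :
    2 * |F x| ≤ ∫ y, |f y| := by
  have hIic : ∫ y in Iic x, f y = F x := by
    simpa using integral_Iic_of_hasDerivAt_of_tendsto' (fun y _ => hderiv y) hf.integrableOn
      (hF.mono_left atBot_le_cocompact)
  have hIoi : ∫ y in Ioi x, f y = -F x := by
    simpa using integral_Ioi_of_hasDerivAt_of_tendsto' (fun y _ => hderiv y) hf.integrableOn
      (hF.mono_left atTop_le_cocompact)
  calc 2 * |F x| = |∫ y in Iic x, f y| + |∫ y in Ioi x, f y| := by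
        rw [hIic, hIoi, abs_neg]; ring
    _ ≤ (∫ y in Iic x, |f y|) + ∫ y in Ioi x, |f y| :=
        add_le_add (abs_integral_le_integral_abs) (abs_integral_le_integral_abs)
    _ = ∫ y, |f y| :=
        intervalIntegral.integral_Iic_add_Ioi hf.abs.integrableOn hf.abs.integrableOn

theorem HasDerivAt.sq_sub_mul_two_mul_add_div_six {u : ℝ → ℝ} {u' a x : ℝ}
    (hu : HasDerivAt u u' x) :
    HasDerivAt (fun y => (u y - a) ^ 2 * (2 * u y + a) / 6) ((u x - a) * (u x * u')) x := by
  refine ((((hu.sub_const a).pow 2).mul ((hu.const_mul 2).add_const a)).div_const 6).congr_deriv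
    ?_
  simp only [Pi.pow_apply, Nat.cast_ofNat, Nat.reduceSub, pow_one]
  ring

theorem sqrt_half_mul_abs_mul_le (a b : ℝ) {β : ℝ} (hβ : 0 ≤ β) :
    √(β / 2) * |a * b| ≤ 1 / 2 * a ^ 2 + 1 / 4 * β * b ^ 2 := by
  have hc : √(β / 2) ^ 2 = β / 2 := Real.sq_sqrt (by positivity)
  have young := two_mul_le_add_sq |a| (√(β / 2) * |b|)
  rw [mul_pow, hc, sq_abs, sq_abs] at young
  rw [abs_mul]
  nlinarith

theorem pointwise_energy_bound_general (g β hbar : ℝ) (hg : 0 < g) (hβ : 0 < β)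
    (h : ℝ → ℝ) (hC1 : ContDiff ℝ 1 h)
    (hint1 : Integrable (fun y => (h y - hbar)^2))
    (hint2 : Integrable (fun y => (deriv h y)^2))
    (hlim : Tendsto h (cocompact ℝ) (nhds hbar)) :
    ∀ x : ℝ, g/3 * Real.sqrt (β/2) * (h x - hbar)^2 * (2 * h x + hbar) ≤
      ∫ y : ℝ, (1/2 * g * (h y - hbar)^2 + 1/4 * β * g * (h y)^2 * (deriv h y)^2) := by
  intro x
  have hcont := hC1.continuous
  have hderiv (y : ℝ) : HasDerivAt h (deriv h y) y :=
    (hC1.differentiable one_ne_zero y).hasDerivAt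
  obtain ⟨M, hM⟩ := isBounded_iff_forall_norm_le.1 <|
    hcont.isBounded_range_iff_isBigO.2 (hlim.isBigO_one ℝ)
  have hint3 : Integrable (fun y => (h y * deriv h y) ^ 2) :=
    integrable_mul_sq_of_abs_le (by fun_prop) (fun y => hM _ (mem_range_self y)) hint2
  have hderiv_cont := hC1.continuous_deriv le_rfl
  have hΦ : Integrable (fun y => (h y - hbar) * (h y * deriv h y)) :=
    integrable_mul_of_integrable_sq (by fun_prop) (by fun_prop) hint1 hint3
  have hF :
      Tendsto (fun y => (h y - hbar) ^ 2 * (2 * h y + hbar) / 6) (cocompact ℝ) (𝓝 0) := by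
    have := (Continuous.tendsto (f := fun t => (t - hbar) ^ 2 * (2 * t + hbar) / 6)
      (by fun_prop) hbar).comp hlim
    rwa [sub_self, zero_pow two_ne_zero, zero_mul, zero_div] at this
  have hE : Integrable
      (fun y => 1/2 * g * (h y - hbar)^2 + 1/4 * β * g * (h y)^2 * (deriv h y)^2) := by
    refine ((hint1.const_mul (1/2 * g)).add (hint3.const_mul (1/4 * β * g))).congr
      (ae_of_all _ fun y => ?_)
    simp only [Pi.add_apply]
    ring
  calc g/3 * √(β/2) * (h x - hbar)^2 * (2 * h x + hbar)
      = g * √(β/2) * (2 * ((h x - hbar) ^ 2 * (2 * h x + hbar) / 6)) := by ring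
    _ ≤ g * √(β/2) * ∫ y, |(h y - hbar) * (h y * deriv h y)| := by
        gcongr
        exact (mul_le_mul_of_nonneg_left (le_abs_self _) zero_le_two).trans
          (two_mul_abs_le_integral_abs_of_hasDerivAt
            (fun y => (hderiv y).sq_sub_mul_two_mul_add_div_six) hΦ hF x)
    _ = ∫ y, g * √(β/2) * |(h y - hbar) * (h y * deriv h y)| := (integral_const_mul _ _).symm
    _ ≤ _ := integral_mono (hΦ.abs.const_mul _) hE fun y => by
        have := mul_le_mul_of_nonneg_left (sqrt_half_mul_abs_mul_le (h y - hbar)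
          (h y * deriv h y) hβ.le) hg.le
        rw [mul_pow] at this
        linarith

/-- Pointwise estimate of `(g/3)√(β/2)(h-h̄)²(2h+h̄)` by the potential part of the
energy of the modified Serre–Green–Naghdi equations. -/
theorem pointwise_energy_bound (g β hbar : ℝ) (hg : 0 < g) (hβ : 0 < β)
    (hhbar : 0 < hbar) (h : ℝ → ℝ) (hC1 : ContDiff ℝ 1 h)
    (hint1 : Integrable (fun y => (h y - hbar)^2))
    (hint2 : Integrable (fun y => (deriv h y)^2))
    (hlim : Tendsto h (cocompact ℝ) (nhds hbar))
    (hpos : ∀ x, 0 < h x) :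
    ∀ x : ℝ, g/3 * Real.sqrt (β/2) * (h x - hbar)^2 * (2 * h x + hbar) ≤
      ∫ y : ℝ, (1/2 * g * (h y - hbar)^2 + 1/4 * β * g * (h y)^2 * (deriv h y)^2) :=
  pointwise_energy_bound_general g β hbar hg hβ h hC1 hint1 hint2 hlim
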